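/- arXiv:1202.2054 — 8 statements merged into one kernel-verified Lean document; each statement's English description precedes it below -/
import Mathlib

section
/- If f : [0,b] → ℝ is convex, then f((a+c)/2) ≤ (1/(c-a)) ∫_a^c f(x) dx ≤ (f(a)+f(c))/2 for all a < c in [0,b]. -/
/-!
The reflection `x ↦ a + c - x` preserves both `[a, c]` and the integral over it, so the mean of
`f` over `[a, c]` equals the mean of `g x = (f x + f (a + c - x)) / 2`. Convexity bounds `g`
pointwise: from below by its value at the common midpoint `(a + c) / 2` of `x` and `a + c - x`,
and from above by `(f a + f c) / 2`, since `x` and `a + c - x` are mirror-image convex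
combinations of `a` and `c`.
-/

open Set intervalIntegral MeasureTheory

section Convex

variable {𝕜 : Type*} [Field 𝕜] [LinearOrder 𝕜] [IsStrictOrderedRing 𝕜] {s : Set 𝕜} {f : 𝕜 → 𝕜}

theorem ConvexOn.map_add_div_two_le (hf : ConvexOn 𝕜 s f) {x y : 𝕜} (hx : x ∈ s) (hy : y ∈ s) :
    f ((x + y) / 2) ≤ (f x + f y) / 2 := by
  have h := hf.2 hx hy (by norm_num : (0 : 𝕜) ≤ 1 / 2) (by norm_num : (0 : 𝕜) ≤ 1 / 2)
    (by norm_num)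
  simp only [smul_eq_mul] at h
  calc f ((x + y) / 2) = f (1 / 2 * x + 1 / 2 * y) := by ring_nf
    _ ≤ 1 / 2 * f x + 1 / 2 * f y := h
    _ = (f x + f y) / 2 := by ring

theorem ConvexOn.map_add_map_reflect_le (hf : ConvexOn 𝕜 s f) {a c x : 𝕜} (ha : a ∈ s)
    (hc : c ∈ s) (hx : x ∈ Icc a c) : f x + f (a + c - x) ≤ f a + f c := by
  obtain ⟨t, u, ht, hu, htu, rfl⟩ := Icc_subset_segment hx
  have hreflect : a + c - (t • a + u • c) = u • a + t • c := by
    simp only [smul_eq_mul]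
    linear_combination (-a - c) * htu
  rw [hreflect]
  calc f (t • a + u • c) + f (u • a + t • c)
      ≤ (t • f a + u • f c) + (u • f a + t • f c) :=
        add_le_add (hf.2 ha hc ht hu htu) (hf.2 ha hc hu ht (by rw [add_comm, htu]))
    _ = f a + f c := by
        simp only [smul_eq_mul]
        linear_combination (f a + f c) * htu

end Convex

theorem IntervalIntegrable.comp_add_sub {E : Type*} [NormedAddCommGroup E] {f : ℝ → E}
    {a c : ℝ} (hf : IntervalIntegrable f volume a c) :
    IntervalIntegrable (fun x => f (a + c - x)) volume a c := by
  simpa using (hf.comp_sub_left (a + c)).symm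

namespace intervalIntegral

variable {E : Type*} [NormedAddCommGroup E] [NormedSpace ℝ E]

theorem integral_comp_add_sub (f : ℝ → E) (a c : ℝ) :
    ∫ x in a..c, f (a + c - x) = ∫ x in a..c, f x := by
  rw [integral_comp_sub_left, add_sub_cancel_right, add_sub_cancel_left]

theorem integral_symmetrize {f : ℝ → ℝ} {a c : ℝ} (hf : IntervalIntegrable f volume a c) :
    ∫ x in a..c, (f x + f (a + c - x)) / 2 = ∫ x in a..c, f x := by
  rw [integral_div, integral_add hf hf.comp_add_sub, integral_comp_add_sub]
  ring

theorem inv_mul_integral_mem_Icc {g : ℝ → ℝ} {a c m M : ℝ} (hac : a < c)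
    (hg : IntervalIntegrable g volume a c) (hgmM : ∀ x ∈ Icc a c, g x ∈ Icc m M) :
    1 / (c - a) * ∫ x in a..c, g x ∈ Icc m M := by
  have hca : 0 < c - a := sub_pos.2 hac
  have hlower := integral_mono_on hac.le intervalIntegrable_const hg fun x hx => (hgmM x hx).1
  have hupper := integral_mono_on hac.le hg intervalIntegrable_const fun x hx => (hgmM x hx).2
  rw [integral_const, smul_eq_mul] at hlower hupper
  rw [one_div_mul_eq_div, mem_Icc, le_div_iff₀ hca, div_le_iff₀ hca]
  constructor <;> linarith

end intervalIntegral

theorem hermite_hadamard (b a c : ℝ) (f : ℝ → ℝ)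
    (hconv : ConvexOn ℝ (Set.Icc 0 b) f)
    (ha : a ∈ Set.Icc (0:ℝ) b) (hc : c ∈ Set.Icc (0:ℝ) b) (hac : a < c)
    (hint : IntervalIntegrable f MeasureTheory.volume a c) :
    f ((a + c) / 2) ≤ (1 / (c - a)) * ∫ x in a..c, f x ∧
      (1 / (c - a)) * ∫ x in a..c, f x ≤ (f a + f c) / 2 := by
  have hsub : Icc a c ⊆ Icc 0 b := Icc_subset_Icc ha.1 hc.2
  rw [← integral_symmetrize hint]
  refine inv_mul_integral_mem_Icc hac ((hint.add hint.comp_add_sub).div_const 2)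
    fun x hx => ⟨?_, ?_⟩
  · have hx' : a + c - x ∈ Icc a c := ⟨by linarith [hx.2], by linarith [hx.1]⟩
    simpa using hconv.map_add_div_two_le (hsub hx) (hsub hx')
  · linarith [hconv.map_add_map_reflect_le ha hc hx]
end

section
/- Let f : [0,∞) → ℝ be m-convex with m ∈ (0,1] and 0 ≤ a < b. If f is integrable on the relevant intervals, then f((a+b)/2) ≤ (1/(b-a)) ∫_a^b (f(x) + m·f(x/m))/2 dx ≤ (1/2)[ (f(a)+m·f(a/m))/2 + m·(f(b/m)+m·f(b/m²))/2 ]. -/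
/-!
Both Hermite–Hadamard bounds come from pairing `x` with its reflection `a + b - x`. For
`φ x = (f x + m f (x / m)) / 2`, m-convexity at `t = 1/2` gives
`2 f ((a + b) / 2) ≤ φ x + φ (a + b - x)`, while m-convexity along the segments from `a` to
`b / m` and from `a / m` to `b / m ^ 2` bounds `φ x + φ (a + b - x)` by the sum of the two endpoint terms. Since the reflection preserves
`∫ x in a..b, φ x`, integrating these pointwise bounds gives the two inequalities.
-/

open Set MeasureTheory

section Reflection

variable {φ : ℝ → ℝ} {a b c : ℝ}

theorem IntervalIntegrable.comp_add_sub_s1 (hφ : IntervalIntegrable φ volume a b) :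
    IntervalIntegrable (fun x => φ (a + b - x)) volume a b := by
  simpa using (hφ.comp_sub_left (a + b)).symm

namespace intervalIntegral

theorem integral_add_comp_add_sub (hφ : IntervalIntegrable φ volume a b) :
    ∫ x in a..b, (φ x + φ (a + b - x)) = 2 * ∫ x in a..b, φ x := by
  rw [integral_add hφ hφ.comp_add_sub_s1, integral_comp_sub_left, add_sub_cancel_right,
    add_sub_cancel_left, two_mul]

theorem mul_le_integral_of_forall_le_add_comp_sub (hab : a ≤ b)
    (hφ : IntervalIntegrable φ volume a b)
    (h : ∀ x ∈ Icc a b, 2 * c ≤ φ x + φ (a + b - x)) :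
    (b - a) * c ≤ ∫ x in a..b, φ x := by
  have := integral_mono_on hab intervalIntegrable_const (hφ.add hφ.comp_add_sub_s1) h
  rw [integral_const, smul_eq_mul, integral_add_comp_add_sub hφ] at this
  linarith

theorem integral_le_mul_of_forall_add_comp_sub_le (hab : a ≤ b)
    (hφ : IntervalIntegrable φ volume a b)
    (h : ∀ x ∈ Icc a b, φ x + φ (a + b - x) ≤ 2 * c) :
    ∫ x in a..b, φ x ≤ (b - a) * c := by
  have := integral_mono_on hab (hφ.add hφ.comp_add_sub_s1) intervalIntegrable_const h
  rw [integral_const, smul_eq_mul, integral_add_comp_add_sub hφ] at this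
  linarith

end intervalIntegral

end Reflection

def MConvex (m : ℝ) (f : ℝ → ℝ) : Prop :=
  ∀ x, 0 ≤ x → ∀ y, 0 ≤ y → ∀ t ∈ Icc (0 : ℝ) 1,
    f (t * x + m * (1 - t) * y) ≤ t * f x + m * (1 - t) * f y

namespace MConvex

variable {m : ℝ} {f : ℝ → ℝ} {a b x y : ℝ}

theorem two_mul_apply_midpoint_le (hf : MConvex m f) (hm : 0 < m) (hx : 0 ≤ x) (hy : 0 ≤ y) :
    2 * f ((x + y) / 2) ≤ f x + m * f (y / m) := by
  have key := hf x hx (y / m) (div_nonneg hy hm.le) (1 / 2) (by norm_num)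
  rw [show 1 / 2 * x + m * (1 - 1 / 2) * (y / m) = (x + y) / 2 by field_simp; ring] at key
  linarith

theorem mul_apply_le_secant (hf : MConvex m f) (hm : 0 < m) (ha : 0 ≤ a) (hab : a < b)
    (hx : x ∈ Icc a b) :
    (b - a) * f x ≤ (b - x) * f a + (x - a) * (m * f (b / m)) := by
  have hba : 0 < b - a := sub_pos.2 hab
  set t := (b - x) / (b - a)
  have ht : t ∈ Icc (0 : ℝ) 1 :=
    ⟨div_nonneg (by linarith [hx.2]) hba.le, (div_le_one hba).2 (by linarith [hx.1])⟩
  have key := hf a ha (b / m) (div_nonneg (by linarith) hm.le) t ht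
  rw [show t * a + m * (1 - t) * (b / m) = x by simp only [t]; field_simp; ring] at key
  have hrhs : (b - a) * (t * f a + m * (1 - t) * f (b / m))
      = (b - x) * f a + (x - a) * (m * f (b / m)) := by
    simp only [t]; field_simp; ring
  rw [← hrhs]
  exact mul_le_mul_of_nonneg_left key hba.le

theorem mul_add_apply_div_le_secant (hf : MConvex m f) (hm : 0 < m) (ha : 0 ≤ a) (hab : a < b)
    (hx : x ∈ Icc a b) :
    (b - a) * (f x + m * f (x / m))
      ≤ (b - x) * (f a + m * f (a / m)) + (x - a) * (m * (f (b / m) + m * f (b / m ^ 2))) := by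
  have hxm : x / m ∈ Icc (a / m) (b / m) :=
    ⟨div_le_div_of_nonneg_right hx.1 hm.le, div_le_div_of_nonneg_right hx.2 hm.le⟩
  have h1 := hf.mul_apply_le_secant hm ha hab hx
  have h2 := hf.mul_apply_le_secant hm (div_nonneg ha hm.le) (div_lt_div_of_pos_right hab hm) hxm
  have h2' : (b - a) * (m * f (x / m))
      ≤ (b - x) * (m * f (a / m)) + (x - a) * (m * (m * f (b / m ^ 2))) := by
    refine (mul_le_mul_of_nonneg_left h2 (mul_self_nonneg m)).trans_eq' ?_ |>.trans_eq ?_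
    · field_simp
    · rw [div_div, ← sq]
      field_simp
  linarith

end MConvex

theorem mconvex_hermite_hadamard (f : ℝ → ℝ) (m a b : ℝ)
    (hm : m ∈ Set.Ioc (0:ℝ) 1)
    (hmc : ∀ x, 0 ≤ x → ∀ y, 0 ≤ y → ∀ t ∈ Set.Icc (0:ℝ) 1,
      f (t * x + m * (1 - t) * y) ≤ t * f x + m * (1 - t) * f y)
    (ha : 0 ≤ a) (hab : a < b)
    (hint : IntervalIntegrable f MeasureTheory.volume a b)
    (hint' : IntervalIntegrable (fun x => f (x / m)) MeasureTheory.volume a b) :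
    f ((a + b) / 2) ≤ (1 / (b - a)) * ∫ x in a..b, (f x + m * f (x / m)) / 2 ∧
      (1 / (b - a)) * ∫ x in a..b, (f x + m * f (x / m)) / 2 ≤
        (1 / 2) * ((f a + m * f (a / m)) / 2 + m * ((f (b / m) + m * f (b / m ^ 2)) / 2)) := by
  have hf : MConvex m f := hmc
  have hm0 := hm.1
  have hba : 0 < b - a := sub_pos.2 hab
  have hφ := (hint.add (hint'.const_mul m)).div_const 2
  have hmem_reflect : ∀ x ∈ Icc a b, a + b - x ∈ Icc a b := fun x hx =>
    ⟨by linarith [hx.2], by linarith [hx.1]⟩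
  rw [one_div_mul_eq_div, le_div_iff₀ hba, div_le_iff₀ hba, mul_comm _ (b - a),
    mul_comm _ (b - a)]
  constructor
  · refine intervalIntegral.mul_le_integral_of_forall_le_add_comp_sub hab.le hφ fun x hx => ?_
    have hx0 : 0 ≤ x := ha.trans hx.1
    have hy0 : 0 ≤ a + b - x := ha.trans (hmem_reflect x hx).1
    have h1 := hf.two_mul_apply_midpoint_le hm0 hx0 hy0
    have h2 := hf.two_mul_apply_midpoint_le hm0 hy0 hx0
    rw [add_sub_cancel] at h1
    rw [add_comm, add_sub_cancel] at h2
    linarith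
  · refine intervalIntegral.integral_le_mul_of_forall_add_comp_sub_le hab.le hφ fun x hx => ?_
    have hy := hmem_reflect x hx
    have hx' := hf.mul_add_apply_div_le_secant hm0 ha hab hx
    have hy' := hf.mul_add_apply_div_le_secant hm0 ha hab hy
    refine le_of_mul_le_mul_left ?_ hba
    linarith
end

section
/- Let f : [0,∞) → ℝ be (α,m)-convex with (α,m) ∈ (0,1]². If 0 ≤ a < b < ∞ and f is integrable on [a,b] and on [a/m, b/m], then f((a+b)/2) ≤ (1/(b-a)) ∫_a^b [f(x) + m(2^α − 1)·f(x/m)] / 2^α dx. -/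
/-!
Taking `t = 1/2` in the defining inequality with `x` and `y = (a + b - x) / m` bounds
`f ((a + b) / 2)` by an expression in `f x` and `f ((a + b - x) / m)`, for every `x ∈ [a, b]`.
Averaging over `[a, b]`, the reflection `x ↦ a + b - x` turns the second integral into
`∫ x in a..b, f (x / m)`.
-/

open MeasureTheory Set

def IsAlphaMConvex (α m : ℝ) (f : ℝ → ℝ) : Prop :=
  ∀ x, 0 ≤ x → ∀ y, 0 ≤ y → ∀ t ∈ Icc (0:ℝ) 1,
    f (t * x + m * (1 - t) * y) ≤ t ^ α * f x + m * (1 - t ^ α) * f y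

theorem IsAlphaMConvex.apply_midpoint {α m : ℝ} {f : ℝ → ℝ} (hf : IsAlphaMConvex α m f)
    {x y : ℝ} (hx : 0 ≤ x) (hy : 0 ≤ y) :
    f ((x + m * y) / 2) ≤ (f x + m * (2 ^ α - 1) * f y) / 2 ^ α := by
  have h := hf x hx y hy (1 / 2) ⟨by norm_num, by norm_num⟩
  have h2 : (0 : ℝ) < 2 ^ α := Real.rpow_pos_of_pos two_pos α
  rw [one_div, Real.inv_rpow zero_le_two] at h
  convert h using 1
  · ring_nf
  · field_simp

theorem IntervalIntegrable.comp_div_const {f : ℝ → ℝ} {a b c : ℝ} (hc : c ≠ 0)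
    (hf : IntervalIntegrable f volume (a / c) (b / c)) :
    IntervalIntegrable (fun x => f (x / c)) volume a b := by
  simpa [div_eq_mul_inv, hc] using hf.comp_mul_right (c := c⁻¹)

theorem intervalIntegral.integral_comp_add_sub_s2 {E : Type*} [NormedAddCommGroup E]
    [NormedSpace ℝ E] (g : ℝ → E) (a b : ℝ) :
    ∫ x in a..b, g (a + b - x) = ∫ x in a..b, g x := by
  simp [intervalIntegral.integral_comp_sub_left g (a + b)]

theorem le_one_div_mul_integral_of_forall_le {g : ℝ → ℝ} {a b c : ℝ} (hab : a < b)
    (hg : IntervalIntegrable g volume a b) (h : ∀ x ∈ Icc a b, c ≤ g x) :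
    c ≤ (1 / (b - a)) * ∫ x in a..b, g x := by
  have hmono := intervalIntegral.integral_mono_on hab.le intervalIntegrable_const hg h
  rw [intervalIntegral.integral_const, smul_eq_mul] at hmono
  rw [one_div_mul_eq_div, le_div_iff₀ (sub_pos.2 hab)]
  linarith

theorem alpha_m_convex_hh_left_general (f : ℝ → ℝ) (α m a b : ℝ)
    (hm : m ∈ Set.Ioc (0:ℝ) 1)
    (hconv : ∀ x, 0 ≤ x → ∀ y, 0 ≤ y → ∀ t ∈ Set.Icc (0:ℝ) 1,
      f (t * x + m * (1 - t) * y) ≤ t ^ α * f x + m * (1 - t ^ α) * f y)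
    (ha : 0 ≤ a) (hab : a < b)
    (hint : IntervalIntegrable f MeasureTheory.volume a b)
    (hint' : IntervalIntegrable f MeasureTheory.volume (a / m) (b / m)) :
    f ((a + b) / 2) ≤
      (1 / (b - a)) * ∫ x in a..b, (f x + m * ((2:ℝ) ^ α - 1) * f (x / m)) / (2:ℝ) ^ α := by
  have hscaled := hint'.comp_div_const hm.1.ne'
  have hrefl : IntervalIntegrable (fun x => f ((a + b - x) / m)) volume a b := by
    simpa using (hscaled.comp_sub_left (a + b)).symm
  have hsymm : ∫ x in a..b, (f x + m * (2 ^ α - 1) * f (x / m)) / 2 ^ α =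
      ∫ x in a..b, (f x + m * (2 ^ α - 1) * f ((a + b - x) / m)) / 2 ^ α := by
    simp only [intervalIntegral.integral_div]
    rw [intervalIntegral.integral_add hint (hscaled.const_mul _),
      intervalIntegral.integral_add hint (hrefl.const_mul _),
      intervalIntegral.integral_const_mul, intervalIntegral.integral_const_mul,
      intervalIntegral.integral_comp_add_sub_s2 (fun x => f (x / m))]
  rw [hsymm]
  refine le_one_div_mul_integral_of_forall_le hab
    ((hint.add (hrefl.const_mul _)).div_const _) fun x hx => ?_
  have hmid : (x + m * ((a + b - x) / m)) / 2 = (a + b) / 2 := by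
    field_simp [hm.1.ne']
    ring
  rw [← hmid]
  exact IsAlphaMConvex.apply_midpoint hconv (ha.trans hx.1)
    (div_nonneg (by linarith [hx.2]) hm.1.le)

theorem alpha_m_convex_hh_left (f : ℝ → ℝ) (α m a b : ℝ)
    (hα : α ∈ Set.Ioc (0:ℝ) 1) (hm : m ∈ Set.Ioc (0:ℝ) 1)
    (hconv : ∀ x, 0 ≤ x → ∀ y, 0 ≤ y → ∀ t ∈ Set.Icc (0:ℝ) 1,
      f (t * x + m * (1 - t) * y) ≤ t ^ α * f x + m * (1 - t ^ α) * f y)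
    (ha : 0 ≤ a) (hab : a < b)
    (hint : IntervalIntegrable f MeasureTheory.volume a b)
    (hint' : IntervalIntegrable f MeasureTheory.volume (a / m) (b / m)) :
    f ((a + b) / 2) ≤
      (1 / (b - a)) * ∫ x in a..b, (f x + m * ((2:ℝ) ^ α - 1) * f (x / m)) / (2:ℝ) ^ α :=
  alpha_m_convex_hh_left_general f α m a b hm hconv ha hab hint hint'
end

section
/- If f is a positive r-convex function on [a,b] (r ≠ 0) with f(a) ≠ f(b) and f integrable, then (1/(b-a)) ∫_a^b f(x) dx ≤ (r/(r+1))·(f(a)^{r+1} − f(b)^{r+1})/(f(a)^r − f(b)^r) when r ≠ -1, and ≤ f(a)f(b)·(ln f(a) − ln f(b))/(f(a) − f(b)) when r = -1. -/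
/-!
By `r`-convexity, `f` lies below `x ↦ c(x) ^ (1 / r)` on `[a, b]`, where `c` is the affine
function with `c a = f a ^ r` and `c b = f b ^ r`. The substitution `t = c(x)` turns the mean of
this bound over `[a, b]` into the mean of `t ^ (1 / r)` over `[f a ^ r, f b ^ r]`, an elementary
integral: a power for `r ≠ -1`, and `log` for `r = -1`.
-/

open Set Real intervalIntegral

def RConvexOn (r : ℝ) (s : Set ℝ) (f : ℝ → ℝ) : Prop :=
  ∀ x ∈ s, ∀ y ∈ s, ∀ l ∈ Icc (0 : ℝ) 1,
    f (l * x + (1 - l) * y) ≤ (l * f x ^ r + (1 - l) * f y ^ r) ^ (1 / r)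

section Chord

variable {a b A B x : ℝ}

lemma chord_eq_convex_comb (hab : a ≠ b) :
    A + (B - A) / (b - a) * (x - a) = (b - x) / (b - a) * A + (1 - (b - x) / (b - a)) * B := by
  field_simp [sub_ne_zero.2 hab.symm]
  ring

lemma chord_weight_mem_Icc (hab : a < b) (hx : x ∈ Icc a b) :
    (b - x) / (b - a) ∈ Icc (0 : ℝ) 1 :=
  ⟨div_nonneg (by linarith [hx.2]) (by linarith),
    (div_le_one (by linarith)).2 (by linarith [hx.1])⟩

lemma chord_pos (hab : a < b) (hA : 0 < A) (hB : 0 < B) (hx : x ∈ Icc a b) :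
    0 < A + (B - A) / (b - a) * (x - a) := by
  rw [chord_eq_convex_comb hab.ne]
  obtain ⟨hl, hl'⟩ := chord_weight_mem_Icc hab hx
  nlinarith [min_le_left A B, min_le_right A B, lt_min hA hB]

lemma integral_comp_chord_div (g : ℝ → ℝ) (hab : a ≠ b) (hAB : A ≠ B) :
    (∫ x in a..b, g (A + (B - A) / (b - a) * (x - a))) / (b - a) =
      (∫ t in A..B, g t) / (B - A) := by
  have hba : b - a ≠ 0 := sub_ne_zero.2 hab.symm
  have hBA : B - A ≠ 0 := sub_ne_zero.2 hAB.symm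
  set c := (B - A) / (b - a)
  have hc : c ≠ 0 := div_ne_zero hBA hba
  have hca : c * a + (A - c * a) = A := by ring
  have hcb : c * b + (A - c * a) = B := by simp only [c]; field_simp; ring
  simp_rw [show ∀ x, A + c * (x - a) = c * x + (A - c * a) from fun x => by ring]
  rw [integral_comp_mul_add _ hc, hca, hcb, smul_eq_mul]
  simp only [c]
  field_simp

end Chord

namespace RConvexOn

variable {f : ℝ → ℝ} {r a b : ℝ}

lemma le_rpow_chord (hf : RConvexOn r (Icc a b) f) (hab : a < b) {x : ℝ} (hx : x ∈ Icc a b) :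
    f x ≤ (f a ^ r + (f b ^ r - f a ^ r) / (b - a) * (x - a)) ^ (1 / r) := by
  have hpt : (b - x) / (b - a) * a + (1 - (b - x) / (b - a)) * b = x := by
    field_simp [(sub_pos.2 hab).ne']
    ring
  rw [chord_eq_convex_comb hab.ne]
  simpa only [hpt] using
    hf a (left_mem_Icc.2 hab.le) b (right_mem_Icc.2 hab.le) _ (chord_weight_mem_Icc hab hx)

lemma average_le (hf : RConvexOn r (Icc a b) f) (hr : r ≠ 0) (hab : a < b)
    (ha : 0 < f a) (hb : 0 < f b) (hne : f a ≠ f b)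
    (hint : IntervalIntegrable f MeasureTheory.volume a b) :
    (∫ x in a..b, f x) / (b - a) ≤
      (∫ t in f a ^ r..f b ^ r, t ^ (1 / r)) / (f b ^ r - f a ^ r) := by
  have hA := rpow_pos_of_pos ha r
  have hB := rpow_pos_of_pos hb r
  have hAB : f a ^ r ≠ f b ^ r := fun h => hne <| by
    simpa only [rpow_rpow_inv ha.le hr, rpow_rpow_inv hb.le hr] using congrArg (· ^ r⁻¹) h
  rw [← integral_comp_chord_div (· ^ (1 / r)) hab.ne hAB]
  refine div_le_div_of_nonneg_right
    (integral_mono_on hab.le hint ?_ fun _ => hf.le_rpow_chord hab) (sub_pos.2 hab).le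
  refine ContinuousOn.intervalIntegrable_of_Icc hab.le ?_
  exact ContinuousOn.rpow_const (by fun_prop) fun x hx => Or.inl (chord_pos hab hA hB hx).ne'

end RConvexOn

theorem r_convex_gill (f : ℝ → ℝ) (r a b : ℝ) (hr : r ≠ 0) (hab : a < b)
    (hpos : ∀ x ∈ Set.Icc a b, 0 < f x)
    (hconv : ∀ x ∈ Set.Icc a b, ∀ y ∈ Set.Icc a b, ∀ l ∈ Set.Icc (0:ℝ) 1,
      f (l * x + (1 - l) * y) ≤ (l * f x ^ r + (1 - l) * f y ^ r) ^ (1 / r))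
    (hne : f a ≠ f b)
    (hint : IntervalIntegrable f MeasureTheory.volume a b) :
    (r ≠ -1 →
      (1 / (b - a)) * ∫ x in a..b, f x ≤
        (r / (r + 1)) * ((f a ^ (r + 1) - f b ^ (r + 1)) / (f a ^ r - f b ^ r))) ∧
    (r = -1 →
      (1 / (b - a)) * ∫ x in a..b, f x ≤
        f a * f b * ((Real.log (f a) - Real.log (f b)) / (f a - f b))) := by
  have ha := hpos a (left_mem_Icc.2 hab.le)
  have hb := hpos b (right_mem_Icc.2 hab.le)
  have hmean := RConvexOn.average_le hconv hr hab ha hb hne hint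
  rw [one_div_mul_eq_div]
  refine ⟨fun hr1 => ?_, fun hr1 => ?_⟩
  · have hA := rpow_pos_of_pos ha r
    have hB := rpow_pos_of_pos hb r
    have hs : 1 / r + 1 ≠ 0 := fun h => hr1 (by field_simp at h; linarith)
    have hpow : ∀ {y : ℝ}, 0 < y → (y ^ r) ^ (1 / r + 1) = y ^ (r + 1) := fun hy => by
      rw [← rpow_mul hy.le]; congr 1; field_simp; ring
    rw [integral_rpow (Or.inr ⟨fun h => hs (by linarith), notMem_uIcc_of_lt hA hB⟩),
      hpow ha, hpow hb] at hmean
    rw [← neg_sub (f b ^ r), ← neg_sub (f b ^ (r + 1)), neg_div_neg_eq]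
    convert hmean using 1
    field_simp
    ring
  · subst hr1
    simp_rw [show (1 : ℝ) / -1 = -1 by norm_num, rpow_neg_one] at hmean
    rw [integral_inv_of_pos (inv_pos.2 ha) (inv_pos.2 hb), inv_div_inv,
      log_div ha.ne' hb.ne'] at hmean
    convert hmean using 1
    field_simp
end

section
/- If f is a positive 0-convex (i.e., log-convex) function on [a,b] with f(a) ≠ f(b) and f integrable, then (1/(b-a)) ∫_a^b f(x) dx ≤ (f(a) − f(b))/(ln f(a) − ln f(b)). -/
/-!
Log-convexity along the chord from `a` to `b` bounds `f` by the geometric interpolation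
`x ↦ f a ^ ((b - x) / (b - a)) * f b ^ ((x - a) / (b - a))` of its endpoint values. This is the
exponential of an affine function, whose mean over `[a, b]` is exactly the logarithmic mean of
`f a` and `f b`.
-/

open Real Set intervalIntegral

theorem integral_exp_mul_add (a b : ℝ) {c : ℝ} (hc : c ≠ 0) (d : ℝ) :
    ∫ x in a..b, exp (c * x + d) = (exp (c * b + d) - exp (c * a + d)) / c := by
  rw [integral_comp_mul_add (fun x ↦ exp x) hc, integral_exp, smul_eq_mul, div_eq_inv_mul]

theorem rpow_mul_rpow_eq_exp {p q : ℝ} (hp : 0 < p) (hq : 0 < q) (s t : ℝ) :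
    p ^ s * q ^ t = exp (s * log p + t * log q) := by
  rw [rpow_def_of_pos hp, rpow_def_of_pos hq, ← exp_add]; ring_nf

theorem integral_rpow_mul_rpow_affine {a b p q : ℝ} (hab : a < b) (hp : 0 < p) (hq : 0 < q)
    (hpq : p ≠ q) :
    ∫ x in a..b, p ^ ((b - x) / (b - a)) * q ^ ((x - a) / (b - a)) =
      (b - a) * ((p - q) / (log p - log q)) := by
  have hba : b - a ≠ 0 := (sub_pos.2 hab).ne'
  have hlog : log p - log q ≠ 0 := sub_ne_zero.2 fun h ↦ hpq (log_injOn_pos hp hq h)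
  have hlog' : log q - log p ≠ 0 := by rwa [← neg_sub, neg_ne_zero]
  have hexp : ∀ x, p ^ ((b - x) / (b - a)) * q ^ ((x - a) / (b - a)) =
      exp ((log q - log p) / (b - a) * x + (b * log p - a * log q) / (b - a)) := fun x ↦ by
    rw [rpow_mul_rpow_eq_exp hp hq]
    congr 1
    field_simp
    ring
  have hb : (log q - log p) / (b - a) * b + (b * log p - a * log q) / (b - a) = log q := by
    field_simp; ring
  have ha : (log q - log p) / (b - a) * a + (b * log p - a * log q) / (b - a) = log p := by
    field_simp; ring
  simp_rw [hexp, integral_exp_mul_add a b (div_ne_zero hlog' hba), hb, ha, exp_log hp, exp_log hq]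
  field_simp
  ring

theorem le_rpow_mul_rpow_of_log_convex {f : ℝ → ℝ} {a b : ℝ} (hab : a < b)
    (hconv : ∀ x ∈ Icc a b, ∀ y ∈ Icc a b, ∀ l ∈ Icc (0:ℝ) 1,
      f (l * x + (1 - l) * y) ≤ f x ^ l * f y ^ (1 - l))
    {x : ℝ} (hx : x ∈ Icc a b) :
    f x ≤ f a ^ ((b - x) / (b - a)) * f b ^ ((x - a) / (b - a)) := by
  have hba : 0 < b - a := sub_pos.2 hab
  have hl : (b - x) / (b - a) ∈ Icc (0:ℝ) 1 :=
    ⟨div_nonneg (by linarith [hx.2]) hba.le, (div_le_one hba).2 (by linarith [hx.1])⟩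
  have h1 : 1 - (b - x) / (b - a) = (x - a) / (b - a) := by field_simp; ring
  have h2 : (b - x) / (b - a) * a + (x - a) / (b - a) * b = x := by field_simp; ring
  simpa only [h1, h2] using
    hconv a (left_mem_Icc.2 hab.le) b (right_mem_Icc.2 hab.le) _ hl

theorem log_convex_gill (f : ℝ → ℝ) (a b : ℝ) (hab : a < b)
    (hpos : ∀ x ∈ Set.Icc a b, 0 < f x)
    (hconv : ∀ x ∈ Set.Icc a b, ∀ y ∈ Set.Icc a b, ∀ l ∈ Set.Icc (0:ℝ) 1,
      f (l * x + (1 - l) * y) ≤ f x ^ l * f y ^ (1 - l))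
    (hne : f a ≠ f b)
    (hint : IntervalIntegrable f MeasureTheory.volume a b) :
    (1 / (b - a)) * ∫ x in a..b, f x ≤
      (f a - f b) / (Real.log (f a) - Real.log (f b)) := by
  have hfa := hpos a (left_mem_Icc.2 hab.le)
  have hfb := hpos b (right_mem_Icc.2 hab.le)
  have hba : 0 < b - a := sub_pos.2 hab
  have hchord : Continuous fun x ↦ f a ^ ((b - x) / (b - a)) * f b ^ ((x - a) / (b - a)) := by
    fun_prop (disch := positivity)
  calc (1 / (b - a)) * ∫ x in a..b, f x
      ≤ (1 / (b - a)) * ∫ x in a..b, f a ^ ((b - x) / (b - a)) * f b ^ ((x - a) / (b - a)) := by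
        gcongr
        exact integral_mono_on hab.le hint (hchord.intervalIntegrable a b)
          fun x hx ↦ le_rpow_mul_rpow_of_log_convex hab hconv hx
    _ = (f a - f b) / (log (f a) - log (f b)) := by
        rw [integral_rpow_mul_rpow_affine hab hfa hfb hne]
        field_simp
end

section
/- Let g : [0,b] → ℝ be (α,m)-convex and f : [0,b] → ℝ. Then f is (g-(α,m))-convex dominated on [0,b] if and only if there exist (α,m)-convex functions h, k on [0,b] with f = (h − k)/2 and g = (h + k)/2. -/
/-- `h` is `(α,m)`-convex on `[0,b]`. -/
def AMConvexOn (b α m : ℝ) (h : ℝ → ℝ) : Prop :=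
  ∀ x ∈ Set.Icc (0:ℝ) b, ∀ y ∈ Set.Icc (0:ℝ) b, ∀ t ∈ Set.Icc (0:ℝ) 1,
    h (t * x + m * (1 - t) * y) ≤ t ^ α * h x + m * (1 - t ^ α) * h y

/-- `f` is `(g-(α,m))`-convex dominated on `[0,b]`. -/
def AMDominated (b α m : ℝ) (g f : ℝ → ℝ) : Prop :=
  ∀ x ∈ Set.Icc (0:ℝ) b, ∀ y ∈ Set.Icc (0:ℝ) b, ∀ t ∈ Set.Icc (0:ℝ) 1,
    |t ^ α * f x + m * (1 - t ^ α) * f y - f (t * x + m * (1 - t) * y)| ≤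
      t ^ α * g x + m * (1 - t ^ α) * g y - g (t * x + m * (1 - t) * y)

theorem dominated_iff_exists_decomposition (b α m : ℝ) (f g : ℝ → ℝ)
    (hα : α ∈ Set.Icc (0:ℝ) 1) (hm : m ∈ Set.Icc (0:ℝ) 1)
    (hg : AMConvexOn b α m g) :
    AMDominated b α m g f ↔
      ∃ h k : ℝ → ℝ, AMConvexOn b α m h ∧ AMConvexOn b α m k ∧
        (∀ x ∈ Set.Icc (0:ℝ) b, f x = (h x - k x) / 2) ∧
        (∀ x ∈ Set.Icc (0:ℝ) b, g x = (h x + k x) / 2) := by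
  constructor
  · intro hd
    refine ⟨fun x => g x + f x, fun x => g x - f x, ?_, ?_, ?_, ?_⟩
    · intro x hx y hy t ht
      have h2 := abs_le.1 (hd x hx y hy t ht)
      simp only
      linarith [h2.1]
    · intro x hx y hy t ht
      have h2 := abs_le.1 (hd x hx y hy t ht)
      simp only
      linarith [h2.2]
    · intro x hx; simp only; ring
    · intro x hx; simp only; ring
  · rintro ⟨h, k, hh, hk, hf, hg'⟩
    intro x hx y hy t ht
    have hz : t * x + m * (1 - t) * y ∈ Set.Icc (0:ℝ) b := by
      constructor
      · have h1 : 0 ≤ t * x := mul_nonneg ht.1 hx.1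
        have h2 : 0 ≤ m * ((1 - t) * y) :=
          mul_nonneg hm.1 (mul_nonneg (by linarith [ht.2]) hy.1)
        nlinarith
      · nlinarith [mul_nonneg ht.1 (sub_nonneg.2 hx.2),
          mul_nonneg (sub_nonneg.2 ht.2) (sub_nonneg.2 hy.2),
          mul_nonneg (mul_nonneg (sub_nonneg.2 hm.2) (sub_nonneg.2 ht.2)) hy.1]
    have Eh := hh x hx y hy t ht
    have Ek := hk x hx y hy t ht
    rw [hf x hx, hf y hy, hf _ hz, hg' x hx, hg' y hy, hg' _ hz, abs_le]
    constructor <;> linarith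
end

section
/- Let g be a positive log-convex function on [a,b] and f : [a,b] → ℝ be (g,0)-convex dominated, with f(a) ≠ f(b), g(a) ≠ g(b), f positive, and f, g integrable on [a,b] (a < b). Then |(f(a) − f(b))/(ln f(a) − ln f(b)) − (1/(b-a)) ∫_a^b f(x) dx| ≤ (g(a) − g(b))/(ln g(a) − ln g(b)) − (1/(b-a)) ∫_a^b g(x) dx. -/
/-!
Substituting `x = t a + (1 - t) b` turns `(1 / (b - a)) ∫_a^b f` into
`∫_0^1 f (t a + (1 - t) b) dt`, and the logarithmic mean `(f a - f b) / (log (f a) - log (f b))`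
is `∫_0^1 f(a)^t f(b)^(1-t) dt`.
Both sides of the inequality are therefore integrals over `[0, 1]` of the two sides of the
domination hypothesis taken at `x = a`, `y = b`, so it suffices to integrate that pointwise bound.
-/

open Real MeasureTheory intervalIntegral Set

lemma rpow_mul_rpow_one_sub_eq {c d : ℝ} (hc : 0 < c) (hd : 0 < d) (t : ℝ) :
    c ^ t * d ^ (1 - t) = d * exp ((log c - log d) * t) := by
  rw [rpow_def_of_pos hc, rpow_def_of_pos hd, ← exp_add, ← exp_log hd, ← exp_add, log_exp]
  ring_nf

lemma continuous_rpow_mul_rpow_one_sub {c d : ℝ} (hc : 0 < c) (hd : 0 < d) :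
    Continuous fun t : ℝ => c ^ t * d ^ (1 - t) := by
  simp_rw [rpow_mul_rpow_one_sub_eq hc hd]
  fun_prop

lemma integral_rpow_mul_rpow_one_sub {c d : ℝ} (hc : 0 < c) (hd : 0 < d) (hne : c ≠ d) :
    ∫ t in (0:ℝ)..1, c ^ t * d ^ (1 - t) = (c - d) / (log c - log d) := by
  have hk : log c - log d ≠ 0 :=
    sub_ne_zero.2 fun h => hne (log_injOn_pos (mem_Ioi.2 hc) (mem_Ioi.2 hd) h)
  simp_rw [rpow_mul_rpow_one_sub_eq hc hd]
  rw [intervalIntegral.integral_const_mul, integral_comp_mul_left (fun x => exp x) hk,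
    integral_exp, mul_zero, mul_one, exp_zero, exp_sub, exp_log hc, exp_log hd, smul_eq_mul]
  field_simp

lemma integral_comp_mul_add_one_sub_mul (h : ℝ → ℝ) {a b : ℝ} (hab : a ≠ b) :
    ∫ t in (0:ℝ)..1, h (t * a + (1 - t) * b) = (1 / (b - a)) * ∫ x in a..b, h x := by
  have hba : a - b ≠ 0 := sub_ne_zero.2 hab
  have hline : ∀ t : ℝ, t * a + (1 - t) * b = (a - b) * t + b := fun t => by ring
  simp_rw [hline]
  rw [integral_comp_mul_add _ hba, mul_zero, zero_add, mul_one, sub_add_cancel,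
    integral_symm a b, smul_eq_mul, mul_neg, ← neg_mul, neg_inv, neg_sub, one_div]

lemma IntervalIntegrable.comp_mul_add_one_sub_mul {h : ℝ → ℝ} {a b : ℝ} (hab : a ≠ b)
    (hh : IntervalIntegrable h volume a b) :
    IntervalIntegrable (fun t => h (t * a + (1 - t) * b)) volume 0 1 := by
  have hba : a - b ≠ 0 := sub_ne_zero.2 hab
  have hline : (fun t : ℝ => h (t * a + (1 - t) * b)) = fun t => h ((a - b) * t + b) := by
    funext t; ring_nf
  have hcomp := (hh.comp_add_right b).comp_mul_left (c := a - b)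
  rw [div_self hba, sub_self, zero_div] at hcomp
  rw [hline]
  exact hcomp.symm

theorem log_dominated_gill_general (f g : ℝ → ℝ) (a b : ℝ) (hab : a < b)
    (hgpos : ∀ x ∈ Set.Icc a b, 0 < g x)
    (hfpos : ∀ x ∈ Set.Icc a b, 0 < f x)
    (hf : ∀ x ∈ Set.Icc a b, ∀ y ∈ Set.Icc a b, ∀ l ∈ Set.Icc (0:ℝ) 1,
      |f x ^ l * f y ^ (1 - l) - f (l * x + (1 - l) * y)| ≤
        g x ^ l * g y ^ (1 - l) - g (l * x + (1 - l) * y))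
    (hfne : f a ≠ f b) (hgne : g a ≠ g b)
    (hfint : IntervalIntegrable f MeasureTheory.volume a b)
    (hgint : IntervalIntegrable g MeasureTheory.volume a b) :
    |(f a - f b) / (Real.log (f a) - Real.log (f b)) - (1 / (b - a)) * ∫ x in a..b, f x| ≤
      (g a - g b) / (Real.log (g a) - Real.log (g b)) - (1 / (b - a)) * ∫ x in a..b, g x := by
  have ha : a ∈ Icc a b := left_mem_Icc.2 hab.le
  have hb : b ∈ Icc a b := right_mem_Icc.2 hab.le
  have hfa := hfpos a ha
  have hfb := hfpos b hb
  have hga := hgpos a ha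
  have hgb := hgpos b hb
  have hf_mean := (continuous_rpow_mul_rpow_one_sub hfa hfb).intervalIntegrable (μ := volume) 0 1
  have hg_mean := (continuous_rpow_mul_rpow_one_sub hga hgb).intervalIntegrable (μ := volume) 0 1
  have hf_comp := hfint.comp_mul_add_one_sub_mul hab.ne
  have hg_comp := hgint.comp_mul_add_one_sub_mul hab.ne
  rw [← integral_rpow_mul_rpow_one_sub hfa hfb hfne,
    ← integral_rpow_mul_rpow_one_sub hga hgb hgne,
    ← integral_comp_mul_add_one_sub_mul f hab.ne, ← integral_comp_mul_add_one_sub_mul g hab.ne,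
    ← integral_sub hf_mean hf_comp, ← integral_sub hg_mean hg_comp, ← Real.norm_eq_abs]
  refine norm_integral_le_of_norm_le zero_le_one (ae_of_all _ fun t ht => ?_) (hg_mean.sub hg_comp)
  exact hf a ha b hb t (Ioc_subset_Icc_self ht)

theorem log_dominated_gill (f g : ℝ → ℝ) (a b : ℝ) (hab : a < b)
    (hgpos : ∀ x ∈ Set.Icc a b, 0 < g x)
    (hfpos : ∀ x ∈ Set.Icc a b, 0 < f x)
    (hg : ∀ x ∈ Set.Icc a b, ∀ y ∈ Set.Icc a b, ∀ l ∈ Set.Icc (0:ℝ) 1,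
      g (l * x + (1 - l) * y) ≤ g x ^ l * g y ^ (1 - l))
    (hf : ∀ x ∈ Set.Icc a b, ∀ y ∈ Set.Icc a b, ∀ l ∈ Set.Icc (0:ℝ) 1,
      |f x ^ l * f y ^ (1 - l) - f (l * x + (1 - l) * y)| ≤
        g x ^ l * g y ^ (1 - l) - g (l * x + (1 - l) * y))
    (hfne : f a ≠ f b) (hgne : g a ≠ g b)
    (hfint : IntervalIntegrable f MeasureTheory.volume a b)
    (hgint : IntervalIntegrable g MeasureTheory.volume a b) :
    |(f a - f b) / (Real.log (f a) - Real.log (f b)) - (1 / (b - a)) * ∫ x in a..b, f x| ≤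
      (g a - g b) / (Real.log (g a) - Real.log (g b)) - (1 / (b - a)) * ∫ x in a..b, g x :=
  log_dominated_gill_general f g a b hab hgpos hfpos hf hfne hgne hfint hgint
end

section
/- Let g be a positive (−1)-convex (harmonically convex in value) function on [a,b], and let f : [a,b] → (0,∞) be (g,−1)-convex dominated, with f(a) ≠ f(b), g(a) ≠ g(b), and f, g integrable on [a,b] (a < b). Then |f(a)f(b)·(ln f(a) − ln f(b))/(f(a) − f(b)) − (1/(b-a)) ∫_a^b f(x) dx| ≤ g(a)g(b)·(ln g(a) − ln g(b))/(g(a) − g(b)) − (1/(b-a)) ∫_a^b g(x) dx. -/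
/-!
Parametrize `[a, b]` by `l ↦ l * a + (1 - l) * b` with `l ∈ [0, 1]`. The mean of `f` over `[a, b]`
becomes `∫₀¹ f (l * a + (1 - l) * b) dl`, and the logarithmic term `f a f b (ln f a - ln f b) / (f a - f b)`
is `∫₀¹ (l / f a + (1 - l) / f b)⁻¹ dl`, the integral of the weighted harmonic means of the endpoint
values. Domination at `x = a`, `y = b` compares the two integrands pointwise, and integrating over
`[0, 1]` gives the inequality.
-/

open intervalIntegral MeasureTheory

lemma weighted_harmonic_mean_inv_pos {p q l : ℝ} (hp : 0 < p) (hq : 0 < q)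
    (hl : l ∈ Set.Icc (0 : ℝ) 1) : 0 < l / p + (1 - l) / q := by
  rw [div_add_div _ _ hp.ne' hq.ne']
  refine div_pos ?_ (mul_pos hp hq)
  rcases le_total p q with h | h <;>
    nlinarith [mul_nonneg hl.1 (sub_nonneg.2 h), mul_nonneg (sub_nonneg.2 hl.2) (sub_nonneg.2 h)]

lemma intervalIntegrable_weighted_harmonic_mean {p q : ℝ} (hp : 0 < p) (hq : 0 < q) :
    IntervalIntegrable (fun l => (l / p + (1 - l) / q)⁻¹) volume 0 1 := by
  refine ContinuousOn.intervalIntegrable (ContinuousOn.inv₀ (by fun_prop) fun l hl => ?_)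
  rw [Set.uIcc_of_le zero_le_one] at hl
  exact (weighted_harmonic_mean_inv_pos hp hq hl).ne'

lemma integral_weighted_harmonic_mean {p q : ℝ} (hp : 0 < p) (hq : 0 < q) (hpq : p ≠ q) :
    ∫ l in (0 : ℝ)..1, (l / p + (1 - l) / q)⁻¹ = p * q * ((Real.log p - Real.log q) / (p - q)) := by
  have hc : p⁻¹ - q⁻¹ ≠ 0 := sub_ne_zero.2 (inv_injective.ne hpq)
  have hlin : (fun l : ℝ => (l / p + (1 - l) / q)⁻¹) = fun l => ((p⁻¹ - q⁻¹) * l + q⁻¹)⁻¹ := by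
    funext l; ring
  have hq0 : (0 : ℝ) ∉ Set.uIcc q⁻¹ p⁻¹ := fun h => by
    rcases Set.mem_uIcc.1 h with ⟨h, -⟩ | ⟨h, -⟩ <;> linarith [inv_pos.2 hp, inv_pos.2 hq]
  rw [hlin, integral_comp_mul_add (·⁻¹) hc, mul_zero, zero_add, mul_one, sub_add_cancel,
    integral_inv hq0, smul_eq_mul, inv_div_inv, Real.log_div hq.ne' hp.ne']
  have hpq' : p - q ≠ 0 := sub_ne_zero.2 hpq
  field_simp
  ring

lemma integral_comp_segment (φ : ℝ → ℝ) {a b : ℝ} (hab : a ≠ b) :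
    ∫ l in (0 : ℝ)..1, φ (l * a + (1 - l) * b) = 1 / (b - a) * ∫ x in a..b, φ x := by
  have hc : a - b ≠ 0 := sub_ne_zero.2 hab
  simp_rw [show ∀ l : ℝ, l * a + (1 - l) * b = (a - b) * l + b by intro l; ring]
  rw [integral_comp_mul_add φ hc, mul_zero, zero_add, mul_one, sub_add_cancel,
    integral_symm a b, smul_eq_mul, ← neg_sub b a, inv_neg, one_div, neg_mul_neg]

lemma IntervalIntegrable.comp_segment {φ : ℝ → ℝ} {a b : ℝ} (hφ : IntervalIntegrable φ volume a b)
    (hab : a ≠ b) : IntervalIntegrable (fun l => φ (l * a + (1 - l) * b)) volume 0 1 := by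
  have hc : a - b ≠ 0 := sub_ne_zero.2 hab
  simpa [div_self hc, show ∀ l : ℝ, l * a + (1 - l) * b = (a - b) * l + b by intro l; ring]
    using (hφ.symm.comp_add_right b).comp_mul_left (c := a - b)

lemma abs_integral_sub_le_integral_sub {F Φ G Γ : ℝ → ℝ} {a b : ℝ} (hab : a ≤ b)
    (hF : IntervalIntegrable F volume a b) (hΦ : IntervalIntegrable Φ volume a b)
    (hG : IntervalIntegrable G volume a b) (hΓ : IntervalIntegrable Γ volume a b)
    (h : ∀ x ∈ Set.Icc a b, |F x - Φ x| ≤ G x - Γ x) :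
    |(∫ x in a..b, F x) - ∫ x in a..b, Φ x| ≤ (∫ x in a..b, G x) - ∫ x in a..b, Γ x := by
  rw [← integral_sub hF hΦ, ← integral_sub hG hΓ]
  exact (abs_integral_le_integral_abs hab).trans
    (integral_mono_on hab (hF.sub hΦ).abs (hG.sub hΓ) h)

theorem neg_one_dominated_gill_general (f g : ℝ → ℝ) (a b : ℝ) (hab : a < b)
    (hgpos : ∀ x ∈ Set.Icc a b, 0 < g x)
    (hfpos : ∀ x ∈ Set.Icc a b, 0 < f x)
    (hf : ∀ x ∈ Set.Icc a b, ∀ y ∈ Set.Icc a b, ∀ l ∈ Set.Icc (0:ℝ) 1,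
      |(l / f x + (1 - l) / f y)⁻¹ - f (l * x + (1 - l) * y)| ≤
        (l / g x + (1 - l) / g y)⁻¹ - g (l * x + (1 - l) * y))
    (hfne : f a ≠ f b) (hgne : g a ≠ g b)
    (hfint : IntervalIntegrable f MeasureTheory.volume a b)
    (hgint : IntervalIntegrable g MeasureTheory.volume a b) :
    |f a * f b * ((Real.log (f a) - Real.log (f b)) / (f a - f b))
        - (1 / (b - a)) * ∫ x in a..b, f x| ≤
      g a * g b * ((Real.log (g a) - Real.log (g b)) / (g a - g b))
        - (1 / (b - a)) * ∫ x in a..b, g x := by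
  have ha : a ∈ Set.Icc a b := Set.left_mem_Icc.2 hab.le
  have hb : b ∈ Set.Icc a b := Set.right_mem_Icc.2 hab.le
  rw [← integral_weighted_harmonic_mean (hfpos a ha) (hfpos b hb) hfne,
    ← integral_weighted_harmonic_mean (hgpos a ha) (hgpos b hb) hgne,
    ← integral_comp_segment f hab.ne, ← integral_comp_segment g hab.ne]
  exact abs_integral_sub_le_integral_sub zero_le_one
    (intervalIntegrable_weighted_harmonic_mean (hfpos a ha) (hfpos b hb)) (hfint.comp_segment hab.ne)
    (intervalIntegrable_weighted_harmonic_mean (hgpos a ha) (hgpos b hb)) (hgint.comp_segment hab.ne)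
    fun l hl => hf a ha b hb l hl

theorem neg_one_dominated_gill (f g : ℝ → ℝ) (a b : ℝ) (hab : a < b)
    (hgpos : ∀ x ∈ Set.Icc a b, 0 < g x)
    (hfpos : ∀ x ∈ Set.Icc a b, 0 < f x)
    (hg : ∀ x ∈ Set.Icc a b, ∀ y ∈ Set.Icc a b, ∀ l ∈ Set.Icc (0:ℝ) 1,
      g (l * x + (1 - l) * y) ≤ (l / g x + (1 - l) / g y)⁻¹)
    (hf : ∀ x ∈ Set.Icc a b, ∀ y ∈ Set.Icc a b, ∀ l ∈ Set.Icc (0:ℝ) 1,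
      |(l / f x + (1 - l) / f y)⁻¹ - f (l * x + (1 - l) * y)| ≤
        (l / g x + (1 - l) / g y)⁻¹ - g (l * x + (1 - l) * y))
    (hfne : f a ≠ f b) (hgne : g a ≠ g b)
    (hfint : IntervalIntegrable f MeasureTheory.volume a b)
    (hgint : IntervalIntegrable g MeasureTheory.volume a b) :
    |f a * f b * ((Real.log (f a) - Real.log (f b)) / (f a - f b))
        - (1 / (b - a)) * ∫ x in a..b, f x| ≤
      g a * g b * ((Real.log (g a) - Real.log (g b)) / (g a - g b))
        - (1 / (b - a)) * ∫ x in a..b, g x :=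
  neg_one_dominated_gill_general f g a b hab hgpos hfpos hf hfne hgne hfint hgint
end
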